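/- (Proposition 4) Let K ≥ 2 and let X_1, …, X_K be finite-valued random variables on a common probability space such that min_{i≠j} I(X_i; X_j) = max_{i≠j} I(X_i; X_j) = μ. Suppose there exists a finite-valued random variable W* jointly distributed with (X_1,…,X_K) such that X_1,…,X_K are conditionally independent given W* and I(X_1,…,X_K; W*) = μ (i.e. the infimum defining B(X_1,…,X_K) is attained at the value max_{i≠j} I(X_i;X_j)). Then C(X_1,…,X_K) = min_{i≠j} I(X_i; X_j) = μ. -/

import Mathlib

open MeasureTheory Real
open scoped ENNReal

/-- Shannon entropy of a finite-valued map `f`, computed from the set-mass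
function `P` (e.g. `P = fun s => μ s` for a probability measure `μ`). -/
noncomputable def entOf {Ω : Type*} {β : Type*} [Fintype β]
    (P : Set Ω → ℝ≥0∞) (f : Ω → β) : ℝ :=
  ∑ b : β, Real.negMulLog (P (f ⁻¹' {b})).toReal

/-- Conditional entropy `H(f | g)`. -/
noncomputable def condEntOf {Ω β γ : Type*} [Fintype β] [Fintype γ]
    (P : Set Ω → ℝ≥0∞) (f : Ω → β) (g : Ω → γ) : ℝ :=
  entOf P (fun ω => (f ω, g ω)) - entOf P g

/-- Mutual information `I(f ; g)`. -/
noncomputable def miOf {Ω β γ : Type*} [Fintype β] [Fintype γ]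
    (P : Set Ω → ℝ≥0∞) (f : Ω → β) (g : Ω → γ) : ℝ :=
  entOf P f + entOf P g - entOf P (fun ω => (f ω, g ω))

/-- Conditional mutual information `I(f ; g | z)`. -/
noncomputable def cmiOf {Ω β γ δ : Type*} [Fintype β] [Fintype γ] [Fintype δ]
    (P : Set Ω → ℝ≥0∞) (f : Ω → β) (g : Ω → γ) (z : Ω → δ) : ℝ :=
  condEntOf P f z + condEntOf P g z - condEntOf P (fun ω => (f ω, g ω)) z

/-- The tuple `X̄ = (X_1, …, X_K)` of the whole family. -/
def tupF {Ω : Type*} {ι : Type*} {α : ι → Type*} (X : ∀ i, Ω → α i) : Ω → ∀ i, α i :=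
  fun ω i => X i ω

/-- The tuple `X̄ ∖ X_k` of the family with index `k` omitted. -/
def tupRest {Ω : Type*} {ι : Type*} {α : ι → Type*} (X : ∀ i, Ω → α i) (k : ι) :
    Ω → ∀ j : {j : ι // j ≠ k}, α j.1 :=
  fun ω j => X j.1 ω

/-- The family `X_1, …, X_K` is conditionally independent given `W`:
`p(x_1, …, x_K | w) = ∏ k p(x_k | w)`, stated multiplicatively. -/
def condIndepFam {Ω : Type*} {ι : Type*} [Fintype ι] {α : ι → Type*}
    {γ : Type*} (P : Set Ω → ℝ≥0∞) (X : ∀ i, Ω → α i) (W : Ω → γ) : Prop :=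
  ∀ (w : γ) (x : ∀ i, α i),
    P {ω | W ω = w ∧ ∀ i, X i ω = x i} * P {ω | W ω = w} ^ (Fintype.card ι - 1)
      = ∏ i, P {ω | W ω = w ∧ X i ω = x i}

/-- The set-mass function associated with a point-mass function `q`. -/
noncomputable def massOf {T : Type*} (q : T → ℝ≥0∞) : Set T → ℝ≥0∞ :=
  fun s => ∑' t : s, q t

/-- The (Gács–Körner type) common information `C(X_1, …, X_K)`: the supremum of
`I(X_1, …, X_K ; W)` over all finite-valued `W` jointly distributed with
`(X_1, …, X_K)` (formalized as a joint pmf `q` on `(∀ i, α i) × γ` whose first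
marginal is the law of `X̄`), subject to the Markov chains
`W − X_k − X̄ ∖ X_k` for every `k`. -/
noncomputable def CInfo {Ω : Type*} {ι : Type} [Fintype ι] [DecidableEq ι]
    {α : ι → Type} [∀ i, Fintype (α i)]
    (P : Set Ω → ℝ≥0∞) (X : ∀ i, Ω → α i) : ℝ :=
  sSup { r : ℝ | ∃ (γ : Type) (_ : Fintype γ) (q : (∀ i, α i) × γ → ℝ≥0∞),
    (∑ z : (∀ i, α i) × γ, q z) = 1 ∧
    (∀ x : ∀ i, α i, massOf q (Prod.fst ⁻¹' {x}) = P (tupF X ⁻¹' {x})) ∧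
    (∀ k : ι, cmiOf (massOf q)
        (tupRest (fun i (p : (∀ i, α i) × γ) => p.1 i) k)
        Prod.snd (fun p => p.1 k) = 0) ∧
    r = miOf (massOf q) Prod.fst Prod.snd }

/-- The (Wyner type) common information `B(X_1, …, X_K)`: the infimum of
`I(X_1, …, X_K ; W)` over all finite-valued `W` jointly distributed with
`(X_1, …, X_K)` such that `X_1, …, X_K` are conditionally independent given `W`. -/
noncomputable def BInfo {Ω : Type*} {ι : Type} [Fintype ι] [DecidableEq ι]
    {α : ι → Type} [∀ i, Fintype (α i)]
    (P : Set Ω → ℝ≥0∞) (X : ∀ i, Ω → α i) : ℝ :=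
  sInf { r : ℝ | ∃ (γ : Type) (_ : Fintype γ) (q : (∀ i, α i) × γ → ℝ≥0∞),
    (∑ z : (∀ i, α i) × γ, q z) = 1 ∧
    (∀ x : ∀ i, α i, massOf q (Prod.fst ⁻¹' {x}) = P (tupF X ⁻¹' {x})) ∧
    condIndepFam (massOf q) (fun i (p : (∀ i, α i) × γ) => p.1 i) Prod.snd ∧
    r = miOf (massOf q) Prod.fst Prod.snd }

/-!
For any `W` satisfying the Markov chains `W − X_k − X̄ ∖ X_k`, the chain rule gives
`I(X̄ ; W) = I(X_i ; W) + I(X̄ ∖ X_i ; W | X_i) = I(X_i ; W)`, and the chain `W − X_j − X_i`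
with data processing gives `I(X_i ; W) ≤ I(X_i ; X_j) = m`; hence `C ≤ m`. Conversely,
conditional independence given `W*` yields `X_k − W* − X_j`, so
`m = I(X_k ; X_j) ≤ I(X_k ; W*) ≤ I(X̄ ; W*) = m`, whence
`I(X̄ ∖ X_k ; W* | X_k) = I(X̄ ; W*) - I(X_k ; W*) = 0`: `W*` is admissible for `C` and attains `m`.

The pairwise informations of a coupling agree with those under `μ` although the `X_k` need not
be measurable: the fibres of `X̄` carry outer measures summing to one, which forces additivity
on them.
-/

open Finset

lemma sub_mul_div_le_mul_log {a u v s : ℝ} (ha : 0 ≤ a) (hau : a ≤ u) (hav : a ≤ v)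
    (hus : u ≤ s) : a - u * v / s ≤ a * (log a + log s - log u - log v) := by
  rcases ha.eq_or_lt with rfl | ha
  · have : 0 ≤ u * v / s := div_nonneg (mul_nonneg hau hav) (hau.trans hus)
    simpa using this
  have hu : 0 < u := ha.trans_le hau
  have hv : 0 < v := ha.trans_le hav
  have hs : 0 < s := hu.trans_le hus
  have hlog := log_le_sub_one_of_pos (x := u * v / (a * s)) (by positivity)
  rw [log_div (by positivity) (by positivity), log_mul hu.ne' hv.ne',
    log_mul ha.ne' hs.ne'] at hlog
  calc a - u * v / s = a * (1 - u * v / (a * s)) := by field_simp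
    _ ≤ a * (log a + log s - log u - log v) := mul_le_mul_of_nonneg_left (by linarith) ha.le

lemma mul_log_eq_zero_of_mul_eq {a u v s : ℝ} (ha : 0 ≤ a) (hau : a ≤ u) (hav : a ≤ v)
    (hus : u ≤ s) (h : u * v = a * s) : a * (log a + log s - log u - log v) = 0 := by
  rcases ha.eq_or_lt with rfl | ha
  · rw [zero_mul]
  have hu : 0 < u := ha.trans_le hau
  have hv : 0 < v := ha.trans_le hav
  have hs : 0 < s := hu.trans_le hus
  have hlog := congrArg log h
  rw [log_mul hu.ne' hv.ne', log_mul ha.ne' hs.ne'] at hlog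
  rw [show log a + log s - log u - log v = 0 by linarith, mul_zero]

lemma sum_sum_sum_comm {β γ δ M : Type*} [Fintype β] [Fintype γ] [Fintype δ] [AddCommMonoid M]
    (F : β → γ → δ → M) : ∑ b, ∑ c, ∑ d, F b c d = ∑ d, ∑ b, ∑ c, F b c d :=
  (sum_congr rfl fun _ _ => sum_comm).trans sum_comm

open scoped Classical in
lemma sum_filter_prod_eq_mul {ι R : Type*} [Fintype ι] [DecidableEq ι] [CommSemiring R]
    {α : ι → Type*} [∀ i, Fintype (α i)] (P : ∀ i, α i → R) (hP : ∀ i, ∑ a, P i a = 1)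
    {i j : ι} (hij : i ≠ j) (b : α i) (c : α j) :
    ∑ x ∈ univ.filter (fun x : ∀ l, α l => x i = b ∧ x j = c), ∏ l, P l (x l)
      = P i b * P j c := by
  let t : ∀ l, Finset (α l) := Function.update (Function.update (fun _ => univ) i {b}) j {c}
  have hti : t i = {b} := by simp [t, Function.update_of_ne hij]
  have htj : t j = {c} := by simp [t]
  have ht : ∀ l, l ≠ i → l ≠ j → t l = univ := fun l hli hlj => by
    simp [t, Function.update_of_ne hli, Function.update_of_ne hlj]
  have hfilter : univ.filter (fun x : ∀ l, α l => x i = b ∧ x j = c) = Fintype.piFinset t := by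
    ext x
    simp only [mem_filter, mem_univ, true_and, Fintype.mem_piFinset]
    refine ⟨fun ⟨hb, hc⟩ l => ?_,
      fun h => ⟨by simpa [hti] using h i, by simpa [htj] using h j⟩⟩
    by_cases hli : l = i
    · subst hli; simp [hti, hb]
    by_cases hlj : l = j
    · subst hlj; simp [htj, hc]
    simp [ht l hli hlj]
  rw [hfilter, ← prod_univ_sum, prod_eq_mul_prod_sdiff_singleton i _ (by simp),
    prod_eq_mul_prod_sdiff_singleton j _ (by simp [hij.symm]), prod_eq_one, hti, htj]
  · simp
  · intro l hl
    simp only [mem_sdiff, mem_univ, mem_singleton, true_and] at hl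
    rw [ht l hl.1 hl.2, hP]

lemma tupF_eq_tupF_iff {T ι : Type*} [DecidableEq ι] {α : ι → Type*} (X : ∀ i, T → α i)
    (k : ι) (t t' : T) :
    tupF X t = tupF X t' ↔ (X k t, tupRest X k t) = (X k t', tupRest X k t') := by
  simp only [tupF, tupRest, funext_iff, Prod.mk.injEq, Subtype.forall]
  refine ⟨fun h => ⟨h k, fun j _ => h j⟩, fun ⟨hk, h⟩ j => ?_⟩
  by_cases hj : j = k
  · exact hj ▸ hk
  · exact h j hj

-- Information quantities for real point weights on a finite type; `entOf_massOf` and its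
-- companions identify them with those of `massOf q` for `w = toReal ∘ q`.
namespace Weighted

open scoped Classical

variable {T β γ δ ε : Type*} [Fintype T] [Fintype β] [Fintype γ] [Fintype δ] [Fintype ε]

noncomputable def mass (w : T → ℝ) (p : T → Prop) : ℝ := ∑ t ∈ univ.filter p, w t

noncomputable def ent (w : T → ℝ) (f : T → β) : ℝ := ∑ b, negMulLog (mass w (f · = b))

noncomputable def mi (w : T → ℝ) (f : T → β) (g : T → γ) : ℝ :=
  ent w f + ent w g - ent w (fun t => (f t, g t))

noncomputable def cmi (w : T → ℝ) (f : T → β) (g : T → γ) (z : T → δ) : ℝ :=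
  ent w (fun t => (f t, z t)) + ent w (fun t => (g t, z t))
    - ent w (fun t => ((f t, g t), z t)) - ent w z

variable {w : T → ℝ}

lemma mass_congr {p p' : T → Prop} (h : ∀ t, p t ↔ p' t) : mass w p = mass w p' := by
  rw [funext fun t => propext (h t)]

lemma mass_nonneg (hw : 0 ≤ w) (p : T → Prop) : 0 ≤ mass w p :=
  sum_nonneg fun t _ => hw t

lemma mass_mono (hw : 0 ≤ w) {p p' : T → Prop} (h : ∀ t, p t → p' t) :
    mass w p ≤ mass w p' :=
  sum_le_sum_of_subset_of_nonneg (monotone_filter_right _ fun t _ => h t) fun t _ _ => hw t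

lemma mass_eq_zero {p : T → Prop} (h : ∀ t, ¬ p t) : mass w p = 0 := by
  simp [mass, h]

lemma mass_eq_sum_mass_and (p : T → Prop) (g : T → γ) :
    mass w p = ∑ c, mass w (fun t => g t = c ∧ p t) := by
  simp only [mass]
  rw [← sum_fiberwise (univ.filter p) g w]
  simp only [filter_filter, and_comm]

lemma sum_mul_comp (h : T → β) (F : β → ℝ) :
    ∑ t, w t * F (h t) = ∑ b, mass w (h · = b) * F b := by
  rw [← sum_fiberwise univ h fun t => w t * F (h t)]
  refine sum_congr rfl fun b _ => ?_
  rw [mass, sum_mul]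
  exact sum_congr rfl fun t ht => by rw [(mem_filter.mp ht).2]

lemma ent_eq_neg_sum_mul_log (f : T → β) :
    ent w f = -∑ t, w t * log (mass w (fun s => f s = f t)) := by
  rw [sum_mul_comp f fun b => log (mass w (f · = b))]
  simp only [ent, negMulLog, neg_mul, sum_neg_distrib]

lemma ent_congr {f : T → β} {g : T → γ} (h : ∀ t t', f t = f t' ↔ g t = g t') :
    ent w f = ent w g := by
  simp only [ent_eq_neg_sum_mul_log]
  congr! 4 with t
  exact mass_congr fun s => h s t

lemma cmi_eq_sum (f : T → β) (g : T → γ) (z : T → δ) :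
    cmi w f g z = ∑ b, ∑ c, ∑ d, mass w (fun t => f t = b ∧ g t = c ∧ z t = d) *
      (log (mass w (fun t => f t = b ∧ g t = c ∧ z t = d)) + log (mass w (z · = d))
        - log (mass w (fun t => f t = b ∧ z t = d))
        - log (mass w (fun t => g t = c ∧ z t = d))) := by
  let L : β × γ × δ → ℝ := fun x =>
    log (mass w (fun t => f t = x.1 ∧ g t = x.2.1 ∧ z t = x.2.2)) + log (mass w (z · = x.2.2))
      - log (mass w (fun t => f t = x.1 ∧ z t = x.2.2))
      - log (mass w (fun t => g t = x.2.1 ∧ z t = x.2.2))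
  calc cmi w f g z = ∑ t, w t * L (f t, g t, z t) := by
        simp only [cmi, ent_eq_neg_sum_mul_log, Prod.mk.injEq, and_assoc, L, ← sum_neg_distrib,
          ← sum_add_distrib, ← sum_sub_distrib]
        exact sum_congr rfl fun t _ => by ring
    _ = _ := by
        rw [sum_mul_comp (fun t => (f t, g t, z t)) L]
        simp only [Fintype.sum_prod_type, Prod.mk.injEq, L]

lemma cmi_nonneg (hw : 0 ≤ w) (f : T → β) (g : T → γ) (z : T → δ) : 0 ≤ cmi w f g z := by
  have hgz : ∀ c d, mass w (fun t => g t = c ∧ z t = d)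
      = ∑ b, mass w (fun t => f t = b ∧ g t = c ∧ z t = d) :=
    fun c d => mass_eq_sum_mass_and _ f
  have hz_f : ∀ d, mass w (z · = d) = ∑ b, mass w (fun t => f t = b ∧ z t = d) :=
    fun d => mass_eq_sum_mass_and _ f
  have hz_g : ∀ d, mass w (z · = d) = ∑ c, mass w (fun t => g t = c ∧ z t = d) :=
    fun d => mass_eq_sum_mass_and _ g
  -- the weights `mass (f, z) * mass (g, z) / mass z` have the same total as the joint ones,
  -- so `log x ≤ x - 1` termwise is Gibbs' inequality
  have htotal : ∑ b, ∑ c, ∑ d, (mass w (fun t => f t = b ∧ g t = c ∧ z t = d)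
      - mass w (fun t => f t = b ∧ z t = d) * mass w (fun t => g t = c ∧ z t = d)
        / mass w (z · = d)) = 0 := by
    rw [sum_sum_sum_comm]
    refine sum_eq_zero fun d _ => ?_
    simp only [sum_sub_distrib]
    rw [sum_comm]
    simp only [← sum_div, ← sum_mul_sum, ← hgz, ← hz_f, ← hz_g, mul_self_div_self, sub_self]
  rw [cmi_eq_sum, ← htotal]
  refine sum_le_sum fun b _ => sum_le_sum fun c _ => sum_le_sum fun d _ =>
    sub_mul_div_le_mul_log (mass_nonneg hw _) (mass_mono hw ?_) (mass_mono hw ?_)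
      (mass_mono hw ?_) <;> tauto

lemma cmi_eq_zero_of_factor (hw : 0 ≤ w) {f : T → β} {g : T → γ} {z : T → δ}
    (h : ∀ b c d, mass w (fun t => f t = b ∧ z t = d) * mass w (fun t => g t = c ∧ z t = d)
      = mass w (fun t => f t = b ∧ g t = c ∧ z t = d) * mass w (z · = d)) :
    cmi w f g z = 0 := by
  rw [cmi_eq_sum]
  exact sum_eq_zero fun b _ => sum_eq_zero fun c _ => sum_eq_zero fun d _ =>
    mul_log_eq_zero_of_mul_eq (mass_nonneg hw _) (mass_mono hw fun t => by tauto)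
      (mass_mono hw fun t => by tauto) (mass_mono hw fun t => by tauto) (h b c d)

lemma mi_pair_right (f : T → β) (g : T → γ) (z : T → δ) :
    mi w f (fun t => (z t, g t)) = mi w f z + cmi w f g z := by
  have e1 : ent w (fun t => (z t, g t)) = ent w (fun t => (g t, z t)) :=
    ent_congr fun t t' => by simp only [Prod.mk.injEq]; tauto
  have e2 : ent w (fun t => (f t, (z t, g t))) = ent w (fun t => ((f t, g t), z t)) :=
    ent_congr fun t t' => by simp only [Prod.mk.injEq]; tauto
  rw [mi, mi, cmi, e1, e2]
  ring

lemma mi_pair_left (f : T → β) (g : T → γ) (z : T → δ) :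
    mi w (fun t => (z t, f t)) g = mi w z g + cmi w f g z := by
  have e1 : ent w (fun t => (z t, f t)) = ent w (fun t => (f t, z t)) :=
    ent_congr fun t t' => by simp only [Prod.mk.injEq]; tauto
  have e2 : ent w (fun t => ((z t, f t), g t)) = ent w (fun t => ((f t, g t), z t)) :=
    ent_congr fun t t' => by simp only [Prod.mk.injEq]; tauto
  have e3 : ent w (fun t => (z t, g t)) = ent w (fun t => (g t, z t)) :=
    ent_congr fun t t' => by simp only [Prod.mk.injEq]; tauto
  rw [mi, mi, cmi, e1, e2, e3]
  ring

lemma cmi_pair_left (f : T → β) (f' : T → ε) (g : T → γ) (z : T → δ) :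
    cmi w (fun t => (f' t, f t)) g z = cmi w f' g z + cmi w f g (fun t => (f' t, z t)) := by
  have e1 : ent w (fun t => ((f' t, f t), z t)) = ent w (fun t => (f t, (f' t, z t))) :=
    ent_congr fun t t' => by simp only [Prod.mk.injEq]; tauto
  have e2 : ent w (fun t => (g t, (f' t, z t))) = ent w (fun t => ((f' t, g t), z t)) :=
    ent_congr fun t t' => by simp only [Prod.mk.injEq]; tauto
  have e3 : ent w (fun t => (((f' t, f t), g t), z t))
      = ent w (fun t => ((f t, g t), (f' t, z t))) :=
    ent_congr fun t t' => by simp only [Prod.mk.injEq]; tauto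
  rw [cmi, cmi, cmi, e1, e2, e3]
  ring

lemma mi_le_mi_of_cmi_eq_zero (hw : 0 ≤ w) {f : T → β} {g : T → γ} {z : T → δ}
    (h : cmi w f g z = 0) : mi w f g ≤ mi w f z := by
  have e1 : ent w (fun t => (z t, g t)) = ent w (fun t => (g t, z t)) :=
    ent_congr fun t t' => by simp only [Prod.mk.injEq]; tauto
  have e2 : ent w (fun t => (f t, (z t, g t))) = ent w (fun t => (f t, (g t, z t))) :=
    ent_congr fun t t' => by simp only [Prod.mk.injEq]; tauto
  have hswap : mi w f (fun t => (z t, g t)) = mi w f (fun t => (g t, z t)) := by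
    rw [mi, mi, e1, e2]
  have := cmi_nonneg hw f z g
  linarith [mi_pair_right (w := w) f g z, mi_pair_right (w := w) f z g]

lemma cmi_le_cmi_of_determines (hw : 0 ≤ w) {f : T → β} {f' : T → ε} (g : T → γ) (z : T → δ)
    (h : ∀ t t', f t = f t' → f' t = f' t') : cmi w f' g z ≤ cmi w f g z := by
  have e1 : ent w (fun t => ((f' t, f t), z t)) = ent w (fun t => (f t, z t)) :=
    ent_congr fun t t' => by simp only [Prod.mk.injEq]; have := h t t'; tauto
  have e2 : ent w (fun t => (((f' t, f t), g t), z t)) = ent w (fun t => ((f t, g t), z t)) :=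
    ent_congr fun t t' => by simp only [Prod.mk.injEq]; have := h t t'; tauto
  have hf : cmi w (fun t => (f' t, f t)) g z = cmi w f g z := by
    rw [cmi, cmi, e1, e2]
  linarith [cmi_pair_left (w := w) f f' g z, cmi_nonneg hw f g (fun t => (f' t, z t))]

end Weighted

namespace Weighted

open scoped Classical

variable {T γ ι : Type*} [Fintype T] {w : T → ℝ} {α : ι → Type*}

lemma mass_and_tupF_eq {X : ∀ i, T → α i} {p : T → Prop} (x : ∀ i, α i) :
    mass w (fun t => tupF X t = x ∧ p t) = mass w (fun t => (∀ i, X i t = x i) ∧ p t) :=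
  mass_congr fun t => by simp only [tupF, funext_iff]

variable [Fintype ι]

def CondIndep (w : T → ℝ) (X : ∀ i, T → α i) (W : T → γ) : Prop :=
  ∀ d (x : ∀ i, α i),
    mass w (fun t => W t = d ∧ ∀ i, X i t = x i) * mass w (W · = d) ^ (Fintype.card ι - 1)
      = ∏ i, mass w (fun t => W t = d ∧ X i t = x i)

variable {X : ∀ i, T → α i} {W : T → γ}

lemma CondIndep.mass_div_eq_prod_div [Nonempty ι] (h : CondIndep w X W) {d : γ}
    (hd : 0 < mass w (W · = d)) (x : ∀ i, α i) :
    mass w (fun t => W t = d ∧ ∀ i, X i t = x i) / mass w (W · = d)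
      = ∏ i, mass w (fun t => W t = d ∧ X i t = x i) / mass w (W · = d) := by
  rw [prod_div_distrib, ← h d x, prod_const, card_univ,
    ← pow_sub_one_mul Fintype.card_ne_zero, mul_comm _ (mass w _),
    mul_div_mul_right _ _ (pow_ne_zero _ hd.ne')]

variable [DecidableEq ι] [∀ i, Fintype (α i)]

lemma mass_eq_sum_filter_tupF (p : T → Prop) {i j : ι} (b : α i) (c : α j) :
    mass w (fun t => X i t = b ∧ X j t = c ∧ p t)
      = ∑ x ∈ univ.filter (fun x : ∀ l, α l => x i = b ∧ x j = c),
          mass w (fun t => p t ∧ ∀ l, X l t = x l) := by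
  rw [mass_eq_sum_mass_and _ (tupF X), sum_filter]
  refine sum_congr rfl fun x _ => ?_
  rw [mass_and_tupF_eq]
  split_ifs with hx
  · refine mass_congr fun t => ⟨fun ⟨hX, _, _, hp⟩ => ⟨hp, hX⟩, fun ⟨hp, hX⟩ => ?_⟩
    exact ⟨hX, (hX i).trans hx.1, (hX j).trans hx.2, hp⟩
  · exact mass_eq_zero fun t ⟨hX, hb, hc, _⟩ =>
      hx ⟨(hX i).symm.trans hb, (hX j).symm.trans hc⟩

lemma CondIndep.mass_pair (hw : 0 ≤ w) (h : CondIndep w X W) {i j : ι} (hij : i ≠ j)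
    (b : α i) (c : α j) (d : γ) :
    mass w (fun t => X i t = b ∧ W t = d) * mass w (fun t => X j t = c ∧ W t = d)
      = mass w (fun t => X i t = b ∧ X j t = c ∧ W t = d) * mass w (W · = d) := by
  have hswap : ∀ l a, mass w (fun t => X l t = a ∧ W t = d)
      = mass w (fun t => W t = d ∧ X l t = a) := fun l a => mass_congr fun t => and_comm
  rcases (mass_nonneg hw (W · = d)).eq_or_lt with hn | hn
  · have h0 : mass w (fun t => X i t = b ∧ W t = d) = 0 :=
      le_antisymm (hn ▸ mass_mono hw fun t ht => ht.2) (mass_nonneg hw _)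
    rw [h0, zero_mul, ← hn, mul_zero]
  have : Nonempty ι := ⟨i⟩
  have hmarg : ∀ l, ∑ a, mass w (fun t => W t = d ∧ X l t = a) / mass w (W · = d) = 1 := by
    intro l
    rw [← sum_div, div_eq_one_iff_eq hn.ne', mass_eq_sum_mass_and (W · = d) (X l)]
    simp only [hswap]
  -- given `W = d` the law of `X̄` is a product, so its `(i, j)`-marginal factorizes
  have key : mass w (fun t => X i t = b ∧ X j t = c ∧ W t = d) / mass w (W · = d)
      = mass w (fun t => W t = d ∧ X i t = b) / mass w (W · = d)
        * (mass w (fun t => W t = d ∧ X j t = c) / mass w (W · = d)) := by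
    rw [mass_eq_sum_filter_tupF, sum_div, sum_congr rfl fun x _ => h.mass_div_eq_prod_div hn x]
    exact sum_filter_prod_eq_mul _ hmarg hij b c
  rw [div_mul_div_comm, div_eq_div_iff hn.ne' (by positivity)] at key
  rw [hswap, hswap]
  exact mul_right_cancel₀ hn.ne' (by linarith)

variable [Fintype γ]

lemma CondIndep.cmi_eq_zero (hw : 0 ≤ w) (h : CondIndep w X W) {i j : ι} (hij : i ≠ j) :
    cmi w (X i) (X j) W = 0 :=
  cmi_eq_zero_of_factor hw (h.mass_pair hw hij)

lemma mi_tupF_eq_add_cmi (k : ι) :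
    mi w (tupF X) W = mi w (X k) W + cmi w (tupRest X k) W (X k) := by
  rw [← mi_pair_left]
  have e1 := ent_congr (w := w) (tupF_eq_tupF_iff X k)
  have e2 : ent w (fun t => (tupF X t, W t))
      = ent w (fun t => ((X k t, tupRest X k t), W t)) :=
    ent_congr fun t t' => by rw [Prod.mk.injEq, Prod.mk.injEq, tupF_eq_tupF_iff X k]
  rw [mi, mi, e1, e2]

lemma mi_tupF_le_of_markov (hw : 0 ≤ w) {i j : ι} (hij : i ≠ j)
    (hi : cmi w (tupRest X i) W (X i) = 0) (hj : cmi w (tupRest X j) W (X j) = 0) :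
    mi w (tupF X) W ≤ mi w (X i) (X j) := by
  have hWi : mi w (tupF X) W = mi w (X i) W := by rw [mi_tupF_eq_add_cmi i, hi, add_zero]
  have hmarkov : cmi w (X i) W (X j) = 0 :=
    le_antisymm (hj ▸ cmi_le_cmi_of_determines hw W (X j) fun t t' h => congrFun h ⟨i, hij⟩)
      (cmi_nonneg hw _ _ _)
  exact hWi ▸ mi_le_mi_of_cmi_eq_zero hw hmarkov

lemma CondIndep.cmi_tupRest_eq_zero (hw : 0 ≤ w) (h : CondIndep w X W) {k j : ι}
    (hkj : k ≠ j) (hle : mi w (tupF X) W ≤ mi w (X k) (X j)) : cmi w (tupRest X k) W (X k) = 0 := by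
  have := mi_le_mi_of_cmi_eq_zero hw (h.cmi_eq_zero hw hkj)
  linarith [mi_tupF_eq_add_cmi (w := w) (X := X) (W := W) k,
    cmi_nonneg hw (tupRest X k) W (X k)]

end Weighted

section MassOf

open scoped Classical

variable {T : Type*} [Fintype T] {q : T → ℝ≥0∞}

lemma ne_top_of_sum_eq_one (hq : ∑ t, q t = 1) (t : T) : q t ≠ ⊤ :=
  ENNReal.sum_ne_top.mp (hq ▸ ENNReal.one_ne_top) t (mem_univ t)

lemma massOf_eq_toOuterMeasure (hq : ∑ t, q t = 1) :
    massOf q = ⇑(PMF.ofFintype q hq).toOuterMeasure := by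
  ext s
  rw [massOf, PMF.toOuterMeasure_apply, _root_.tsum_subtype]
  rfl

lemma massOf_eq_sum_filter (s : Set T) : massOf q s = ∑ t ∈ univ.filter (· ∈ s), q t := by
  rw [massOf, _root_.tsum_subtype, tsum_fintype, sum_filter]
  exact sum_congr rfl fun t _ => Set.indicator_apply _ _ _

lemma toReal_massOf (hq : ∀ t, q t ≠ ⊤) (s : Set T) :
    (massOf q s).toReal = Weighted.mass (fun t => (q t).toReal) (· ∈ s) := by
  rw [massOf_eq_sum_filter, ENNReal.toReal_sum fun t _ => hq t, Weighted.mass]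

lemma condIndepFam_massOf {ι γ : Type*} [Fintype ι] {α : ι → Type*} {X : ∀ i, T → α i}
    {W : T → γ} (hq : ∀ t, q t ≠ ⊤) (h : condIndepFam (massOf q) X W) :
    Weighted.CondIndep (fun t => (q t).toReal) X W := fun d x => by
  have := congrArg ENNReal.toReal (h d x)
  simp only [ENNReal.toReal_mul, ENNReal.toReal_pow, ENNReal.toReal_prod, toReal_massOf hq] at this
  exact this

variable {β γ δ : Type*} [Fintype β] [Fintype γ] [Fintype δ]

lemma entOf_massOf (hq : ∀ t, q t ≠ ⊤) (f : T → β) :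
    entOf (massOf q) f = Weighted.ent (fun t => (q t).toReal) f := by
  simp only [entOf, Weighted.ent, toReal_massOf hq]
  rfl

lemma miOf_massOf (hq : ∀ t, q t ≠ ⊤) (f : T → β) (g : T → γ) :
    miOf (massOf q) f g = Weighted.mi (fun t => (q t).toReal) f g := by
  simp only [miOf, Weighted.mi, entOf_massOf hq]

lemma cmiOf_massOf (hq : ∀ t, q t ≠ ⊤) (f : T → β) (g : T → γ) (z : T → δ) :
    cmiOf (massOf q) f g z = Weighted.cmi (fun t => (q t).toReal) f g z := by
  simp only [cmiOf, condEntOf, Weighted.cmi, entOf_massOf hq]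
  ring

variable {ι : Type*} [Fintype ι] [DecidableEq ι] {α : ι → Type*} [∀ i, Fintype (α i)]
  {X : ∀ i, T → α i} {W : T → γ}

lemma miOf_massOf_tupF_le_of_markov (hq : ∀ t, q t ≠ ⊤)
    (hmarkov : ∀ k, cmiOf (massOf q) (tupRest X k) W (X k) = 0) {i j : ι} (hij : i ≠ j) :
    miOf (massOf q) (tupF X) W ≤ miOf (massOf q) (X i) (X j) := by
  simp only [cmiOf_massOf hq] at hmarkov
  rw [miOf_massOf hq, miOf_massOf hq]
  exact Weighted.mi_tupF_le_of_markov (fun t => ENNReal.toReal_nonneg) hij (hmarkov i) (hmarkov j)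

lemma condIndepFam.cmiOf_massOf_tupRest_eq_zero (hq : ∀ t, q t ≠ ⊤)
    (h : condIndepFam (massOf q) X W) {k j : ι} (hkj : k ≠ j)
    (hle : miOf (massOf q) (tupF X) W ≤ miOf (massOf q) (X k) (X j)) :
    cmiOf (massOf q) (tupRest X k) W (X k) = 0 := by
  rw [miOf_massOf hq, miOf_massOf hq] at hle
  rw [cmiOf_massOf hq]
  exact (condIndepFam_massOf hq h).cmi_tupRest_eq_zero (fun t => ENNReal.toReal_nonneg) hkj hle

end MassOf

lemma measure_preimage_eq_toOuterMeasure {Ω V : Type*} [MeasurableSpace Ω] [Fintype V]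
    (μ : Measure Ω) [IsProbabilityMeasure μ] {Y : Ω → V} {p : PMF V}
    (h : ∀ x, μ (Y ⁻¹' {x}) = p x) (S : Set V) : μ (Y ⁻¹' S) = p.toOuterMeasure S := by
  have hle : ∀ S : Set V, μ (Y ⁻¹' S) ≤ p.toOuterMeasure S := fun S => by
    classical
    calc μ (Y ⁻¹' S) = μ (⋃ x ∈ S.toFinset, Y ⁻¹' {x}) := by
          simp only [Set.mem_toFinset, Set.biUnion_preimage_singleton]
      _ ≤ ∑ x ∈ S.toFinset, μ (Y ⁻¹' {x}) := measure_biUnion_finset_le _ _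
      _ = p.toOuterMeasure S := by
          simp only [h]
          rw [← PMF.toOuterMeasure_apply_finset, Set.coe_toFinset]
  have hsum : p.toOuterMeasure S + p.toOuterMeasure Sᶜ = 1 := by
    simpa only [PMF.toOuterMeasure_apply_fintype, ← sum_add_distrib,
      Set.indicator_self_add_compl_apply, tsum_fintype] using p.tsum_coe
  have hne : p.toOuterMeasure Sᶜ ≠ ⊤ := by
    rw [PMF.toOuterMeasure_apply]
    exact p.tsum_coe_indicator_ne_top _
  refine le_antisymm (hle S) (ENNReal.le_of_add_le_add_right hne ?_)
  calc p.toOuterMeasure S + p.toOuterMeasure Sᶜ = μ Set.univ := by rw [hsum, measure_univ]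
    _ ≤ μ (Y ⁻¹' S) + μ (Y ⁻¹' Sᶜ) := measure_univ_le_add_compl _
    _ ≤ μ (Y ⁻¹' S) + p.toOuterMeasure Sᶜ := by gcongr; exact hle _

lemma measure_preimage_eq_massOf {Ω V T : Type*} [MeasurableSpace Ω] [Fintype V] [Fintype T]
    (μ : Measure Ω) [IsProbabilityMeasure μ] {Y : Ω → V} {Z : T → V} {q : T → ℝ≥0∞}
    (hq : ∑ t, q t = 1) (h : ∀ x, massOf q (Z ⁻¹' {x}) = μ (Y ⁻¹' {x})) (S : Set V) :
    μ (Y ⁻¹' S) = massOf q (Z ⁻¹' S) := by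
  have hmap : ∀ S, massOf q (Z ⁻¹' S) = ((PMF.ofFintype q hq).map Z).toOuterMeasure S := by
    intro S
    rw [PMF.toOuterMeasure_map_apply, massOf_eq_toOuterMeasure hq]
  rw [hmap]
  refine measure_preimage_eq_toOuterMeasure μ (fun x => ?_) S
  rw [← PMF.toOuterMeasure_apply_singleton, ← hmap, h]

lemma entOf_comp_eq_of_preimage {Ω₁ Ω₂ V β : Type*} [Fintype β] {P₁ : Set Ω₁ → ℝ≥0∞}
    {P₂ : Set Ω₂ → ℝ≥0∞} {Y₁ : Ω₁ → V} {Y₂ : Ω₂ → V}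
    (h : ∀ S, P₁ (Y₁ ⁻¹' S) = P₂ (Y₂ ⁻¹' S)) (G : V → β) :
    entOf P₁ (G ∘ Y₁) = entOf P₂ (G ∘ Y₂) := by
  simp only [entOf]
  exact sum_congr rfl fun b _ => by rw [Set.preimage_comp, Set.preimage_comp, h]

lemma miOf_comp_eq_of_preimage {Ω₁ Ω₂ V β γ : Type*} [Fintype β] [Fintype γ]
    {P₁ : Set Ω₁ → ℝ≥0∞} {P₂ : Set Ω₂ → ℝ≥0∞} {Y₁ : Ω₁ → V} {Y₂ : Ω₂ → V}
    (h : ∀ S, P₁ (Y₁ ⁻¹' S) = P₂ (Y₂ ⁻¹' S)) (G : V → β) (H : V → γ) :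
    miOf P₁ (G ∘ Y₁) (H ∘ Y₁) = miOf P₂ (G ∘ Y₂) (H ∘ Y₂) := by
  simp only [miOf]
  rw [entOf_comp_eq_of_preimage h G, entOf_comp_eq_of_preimage h H]
  exact congrArg _ (entOf_comp_eq_of_preimage h fun v => (G v, H v))

/-- Proposition 4: if all pairwise mutual informations equal `m` and
the infimum defining `B(X_1, …, X_K)` is attained at the value `m` (by some
finite-valued `W*` jointly distributed with `X̄`, given `X_1, …, X_K` are
conditionally independent given `W*` and `I(X̄ ; W*) = m`), then
`C(X_1, …, X_K) = min_{i ≠ j} I(X_i ; X_j) = m`. -/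
theorem stmt9 {Ω : Type*} [MeasurableSpace Ω] (μ : Measure Ω) [IsProbabilityMeasure μ]
    {K : ℕ} (hK : 2 ≤ K) {α : Fin K → Type} [∀ k, Fintype (α k)]
    (X : ∀ k, Ω → α k) (m : ℝ)
    (hpair : ∀ i j : Fin K, i ≠ j → miOf (fun s => μ s) (X i) (X j) = m)
    (hW : ∃ (γ : Type) (_ : Fintype γ) (q : (∀ i, α i) × γ → ℝ≥0∞),
      (∑ z : (∀ i, α i) × γ, q z) = 1 ∧
      (∀ x : ∀ i, α i, massOf q (Prod.fst ⁻¹' {x}) = μ (tupF X ⁻¹' {x})) ∧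
      condIndepFam (massOf q) (fun i (p : (∀ i, α i) × γ) => p.1 i) Prod.snd ∧
      miOf (massOf q) Prod.fst Prod.snd = m) :
    CInfo (fun s => μ s) X = m := by
  have : Nontrivial (Fin K) := Fin.nontrivial_iff_two_le.mpr hK
  have hcoupling : ∀ {γ : Type} [Fintype γ] {q : (∀ i, α i) × γ → ℝ≥0∞}, ∑ z, q z = 1 →
      (∀ x, massOf q (Prod.fst ⁻¹' {x}) = μ (tupF X ⁻¹' {x})) →
      ∀ i j, i ≠ j → miOf (massOf q) (fun p => p.1 i) (fun p => p.1 j) = m :=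
    fun hq hmarg i j hij => (miOf_comp_eq_of_preimage (measure_preimage_eq_massOf μ hq hmarg)
      (· i) (· j)).symm.trans (hpair i j hij)
  obtain ⟨γ, _, q, hq, hmarg, hci, hmi⟩ := hW
  refine IsGreatest.csSup_eq ⟨⟨γ, _, q, hq, hmarg, fun k => ?_, hmi.symm⟩, ?_⟩
  · obtain ⟨j, hjk⟩ := exists_ne k
    exact hci.cmiOf_massOf_tupRest_eq_zero (ne_top_of_sum_eq_one hq) hjk.symm
      (hmi.trans (hcoupling hq hmarg k j hjk.symm).symm).le
  · rintro r ⟨γ', _, q', hq', hmarg', hmarkov, rfl⟩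
    obtain ⟨i, j, hij⟩ := exists_pair_ne (Fin K)
    exact (miOf_massOf_tupF_le_of_markov (ne_top_of_sum_eq_one hq') hmarkov hij).trans
      (hcoupling hq' hmarg' i j hij).le
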